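/- Let G be a finite simple graph and let k ≥ 4 be an even integer. A real number λ is a signless Laplacian H-eigenvalue of the generalized power hypergraph G^{k,k/2} if and only if there exists a nonempty subset U ⊆ V(G) such that the induced subgraph G[U] is connected and λ is an eigenvalue of the principal submatrix Q(G)[U] of the signless Laplacian matrix Q(G) = D(G) + A(G) of G. -/

import Mathlib

open Finset

/-- The edge set of the generalized power hypergraph `G^{k, k/2}` (with `s = k/2`):
each edge `{u,v}` of `G` is blown up into the `2s`-set `({u} × Fin s) ∪ ({v} × Fin s)`. -/
def powerEdges {V : Type*} [Fintype V] [DecidableEq V] (G : SimpleGraph V)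
    [DecidableRel G.Adj] (s : ℕ) : Finset (Finset (V × Fin s)) :=
  (Finset.univ.filter fun p : V × V => G.Adj p.1 p.2).image
    (fun p => ({p.1} ×ˢ (Finset.univ : Finset (Fin s)))
        ∪ ({p.2} ×ˢ (Finset.univ : Finset (Fin s))))

/-- `lam` is an adjacency H-eigenvalue of the generalized power hypergraph `G^{k,s}`
(`k = 2s`) with H-eigenvector `x`. -/
def IsAdjHEigPow {V : Type*} [Fintype V] [DecidableEq V] (G : SimpleGraph V)
    [DecidableRel G.Adj] (k s : ℕ) (lam : ℝ) (x : V × Fin s → ℝ) : Prop :=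
  x ≠ 0 ∧ ∀ p : V × Fin s,
    lam * x p ^ (k - 1)
      = ∑ e ∈ (powerEdges G s).filter (fun e => p ∈ e), ∏ w ∈ e.erase p, x w

/-- `lam` is a signless Laplacian H-eigenvalue of the generalized power hypergraph
`G^{k,s}` (`k = 2s`) with H-eigenvector `x`. -/
def IsQHEigPow {V : Type*} [Fintype V] [DecidableEq V] (G : SimpleGraph V)
    [DecidableRel G.Adj] (k s : ℕ) (lam : ℝ) (x : V × Fin s → ℝ) : Prop :=
  x ≠ 0 ∧ ∀ p : V × Fin s,
    lam * x p ^ (k - 1)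
      = (((powerEdges G s).filter (fun e => p ∈ e)).card : ℝ) * x p ^ (k - 1)
        + ∑ e ∈ (powerEdges G s).filter (fun e => p ∈ e), ∏ w ∈ e.erase p, x w

/-!
For an H-eigenvector `x` of `G^{k,s}` put `P v = ∏ i, x (v, i)`. Multiplying the equation at
`(v, i)` by `x (v, i)` shows that on a block with `P v ≠ 0` all the `x (v, i) ^ k` agree unless
`λ = d_v`; either way `(λ - d_v) P v = ∑_{u ~ v} P u`. So `P` satisfies `Q P = λ P` at every
vertex of its support, and restricted to one connected component of the subgraph spanned by that
support it is an eigenvector of the principal submatrix. If `P = 0`, some block holds both a zero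
and a nonzero entry, which forces `λ = d_v`, and `U = {v}` works.

Conversely, an eigenvector `y` of `Q(G)[U]`, extended by zero, becomes an H-eigenvector by
splitting every `y v` into `s` factors of absolute value `|y v| ^ (1 / s)`. Since `s ≥ 2`, a zero
block kills the term `∏_{j ≠ i} x (v, j)` and with it the neighbourhood sum at `v`.
-/

open Finset Matrix

namespace SimpleGraph

variable {V : Type*} [Fintype V] [DecidableEq V] (G : SimpleGraph V) [DecidableRel G.Adj]

def signlessLapMatrix (R : Type*) [AddMonoidWithOne R] : Matrix V V R :=
  G.degMatrix R + G.adjMatrix R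

theorem signlessLapMatrix_mulVec_apply {R : Type*} [NonAssocSemiring R] (v : V) (f : V → R) :
    (G.signlessLapMatrix R *ᵥ f) v = G.degree v * f v + ∑ u ∈ G.neighborFinset v, f u := by
  rw [signlessLapMatrix, Matrix.add_mulVec, Pi.add_apply, degMatrix_mulVec_apply,
    adjMatrix_mulVec_apply]

theorem signlessLapMatrix_apply_of_not_adj {R : Type*} [AddMonoidWithOne R] {u w : V}
    (hne : u ≠ w) (hadj : ¬ G.Adj u w) : G.signlessLapMatrix R u w = 0 := by
  simp [signlessLapMatrix, degMatrix, hne, hadj]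

end SimpleGraph

open SimpleGraph

section SupportEigenvector

variable {V R : Type*} [Fintype V] [Semiring R]

def IsEigenvectorOnSupport (A : Matrix V V R) (lam : R) (f : V → R) : Prop :=
  f ≠ 0 ∧ ∀ v, f v ≠ 0 → (A *ᵥ f) v = lam * f v

theorem Matrix.submatrix_val_mulVec_apply {A : Matrix V V R} {U : Finset V} {f : V → R}
    (w : U) (hf : ∀ u ∉ U, A w u * f u = 0) :
    (A.submatrix (↑) (↑) *ᵥ fun u : U => f u) w = (A *ᵥ f) w := by
  simp only [Matrix.mulVec, dotProduct, Matrix.submatrix_apply]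
  rw [sum_coe_sort U (fun u => A w u * f u)]
  exact sum_subset (subset_univ U) fun u _ hu => hf u hu

theorem exists_isEigenvectorOnSupport_of_submatrix {A : Matrix V V R} {lam : R} {U : Finset V}
    {y : U → R} (hy : y ≠ 0) (hAy : A.submatrix (↑) (↑) *ᵥ y = lam • y) :
    ∃ f : V → R, IsEigenvectorOnSupport A lam f := by
  classical
  set f : V → R := fun v => if hv : v ∈ U then y ⟨v, hv⟩ else 0
  have hfU : ∀ u ∉ U, f u = 0 := fun u hu => dif_neg hu
  have hfy : (fun u : U => f u) = y := funext fun u => dif_pos u.2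
  refine ⟨f, fun hf => hy (hfy ▸ funext fun u => congrFun hf u), fun v hv => ?_⟩
  have hvU : v ∈ U := by_contra fun h => hv (hfU v h)
  rw [← Matrix.submatrix_val_mulVec_apply (f := f) ⟨v, hvU⟩ fun u hu => by rw [hfU u hu, mul_zero],
    hfy, hAy, Pi.smul_apply, smul_eq_mul, ← congrFun hfy]

theorem IsEigenvectorOnSupport.exists_connected_submatrix {A : Matrix V V R} {lam : R}
    {f : V → R} (hf : IsEigenvectorOnSupport A lam f) {G : SimpleGraph V}
    (hA : ∀ u w, u ≠ w → ¬ G.Adj u w → A u w = 0) :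
    ∃ U : Finset V, U.Nonempty ∧ (G.induce (U : Set V)).Connected ∧
      ∃ y : U → R, y ≠ 0 ∧ A.submatrix (↑) (↑) *ᵥ y = lam • y := by
  classical
  obtain ⟨v₀, hv₀⟩ := Function.ne_iff.1 hf.1
  set H : SimpleGraph V := ((⊤ : G.Subgraph).induce {v | f v ≠ 0}).spanningCoe
  set C := H.connectedComponentMk v₀
  have hH : ∀ {u w}, H.Adj u w ↔ f u ≠ 0 ∧ f w ≠ 0 ∧ G.Adj u w := by simp [H]
  have hsupp : ∀ v ∈ C.supp, f v ≠ 0 := by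
    intro v hv
    obtain ⟨p⟩ := (ConnectedComponent.mem_supp_iff C v).1 hv |> ConnectedComponent.exact
    by_cases hp : p.Nil
    · exact hp.eq ▸ hv₀
    · exact (hH.1 (p.adj_snd hp)).1
  refine ⟨C.supp.toFinset, ⟨v₀, by simp [C]⟩, ?_, fun u => f u, ?_, ?_⟩
  · rw [Set.coe_toFinset]
    exact (C.maximal_connected_induce_supp.1).mono (comap_monotone _ (Subgraph.spanningCoe_le _))
  · exact fun h => hv₀ (congrFun h ⟨v₀, by simp [C]⟩)
  · ext w
    have hw : (w : V) ∈ C.supp := Set.mem_toFinset.1 w.2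
    rw [Pi.smul_apply, smul_eq_mul, ← hf.2 w (hsupp w hw)]
    refine Matrix.submatrix_val_mulVec_apply w fun u hu => ?_
    have hu : u ∉ C.supp := fun h => hu (Set.mem_toFinset.2 h)
    by_cases hfu : f u = 0
    · rw [hfu, mul_zero]
    have hwu : ¬ G.Adj w u := fun hadj => hu <| .trans
      (ConnectedComponent.connectedComponentMk_eq_of_adj (hH.2 ⟨hsupp w hw, hfu, hadj⟩)).symm hw
    rw [hA w u (fun h => hu (h ▸ hw)) hwu, zero_mul]

end SupportEigenvector

section BalancedFactors

variable {ι : Type*} [Fintype ι] [DecidableEq ι]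

omit [DecidableEq ι] in
theorem prod_sq_eq_of_forall_pow_eq {z : ι → ℝ} {i₀ : ι}
    (h : ∀ i, z i ^ (2 * Fintype.card ι) = z i₀ ^ (2 * Fintype.card ι)) :
    (∏ i, z i) ^ 2 = z i₀ ^ (2 * Fintype.card ι) := by
  have : Nonempty ι := ⟨i₀⟩
  have hsq : ∀ i, z i ^ 2 = z i₀ ^ 2 := fun i =>
    (pow_left_inj₀ (sq_nonneg _) (sq_nonneg _) Fintype.card_ne_zero).1 <| by
      rw [← pow_mul, ← pow_mul, h i]
  rw [← prod_pow, prod_congr rfl fun i _ => hsq i, prod_const, card_univ, ← pow_mul]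

theorem sub_mul_prod_eq_of_forall [Nonempty ι] {k : ℕ} (hk : k = 2 * Fintype.card ι)
    {z : ι → ℝ} (hz : ∏ i, z i ≠ 0) {lam d N : ℝ}
    (h : ∀ i, lam * z i ^ (k - 1) = d * z i ^ (k - 1) + (∏ j ∈ univ.erase i, z j) * N) :
    (lam - d) * ∏ i, z i = N := by
  have hk0 : 1 ≤ k := by have := Fintype.card_pos (α := ι); omega
  have hpow : ∀ i, (lam - d) * z i ^ k = (∏ i, z i) * N := fun i => by
    rw [← prod_erase_mul _ _ (mem_univ i), ← Nat.sub_add_cancel hk0, pow_succ]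
    linear_combination z i * h i
  obtain ⟨i₀⟩ := ‹Nonempty ι›
  by_cases hld : lam = d
  · have hN : N = 0 := by
      simpa [hld, hz] using (hpow i₀).symm
    rw [hld, hN, sub_self, zero_mul]
  · have hsq := prod_sq_eq_of_forall_pow_eq (i₀ := i₀) fun i => by
      rw [← hk]
      exact mul_left_cancel₀ (sub_ne_zero.2 hld) ((hpow i).trans (hpow i₀).symm)
    rw [← hk] at hsq
    apply mul_left_cancel₀ hz
    linear_combination hpow i₀ + (lam - d) * hsq

theorem pow_pred_eq_prod_erase_mul {z : ι → ℝ} {m : ℕ} (hm : 2 ≤ m) {i : ι}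
    (h : z i ^ m = (∏ j, z j) ^ 2) :
    z i ^ (m - 1) = (∏ j ∈ univ.erase i, z j) * ∏ j, z j := by
  by_cases hzi : z i = 0
  · rw [hzi, prod_eq_zero (mem_univ i) hzi, zero_pow (by omega), mul_zero]
  · apply mul_right_cancel₀ hzi
    rw [← pow_succ, Nat.sub_add_cancel (by omega), h, mul_right_comm,
      prod_erase_mul _ _ (mem_univ i), sq]

noncomputable def balancedFactors (i₀ : ι) (t : ℝ) (i : ι) : ℝ :=
  if i = i₀ ∧ t < 0 then -(|t| ^ (Fintype.card ι : ℝ)⁻¹) else |t| ^ (Fintype.card ι : ℝ)⁻¹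

theorem balancedFactors_zero (i₀ : ι) : balancedFactors i₀ 0 = 0 := by
  have : Nonempty ι := ⟨i₀⟩
  ext i
  simp [balancedFactors, Real.zero_rpow (inv_ne_zero (Nat.cast_ne_zero.2 Fintype.card_ne_zero))]

theorem prod_balancedFactors (i₀ : ι) (t : ℝ) : ∏ i, balancedFactors i₀ t i = t := by
  have : Nonempty ι := ⟨i₀⟩
  have hn : Fintype.card ι ≠ 0 := Fintype.card_ne_zero
  have hoff : ∀ i ∈ univ.erase i₀, balancedFactors i₀ t i = |t| ^ (Fintype.card ι : ℝ)⁻¹ :=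
    fun i hi => if_neg fun h => (mem_erase.1 hi).1 h.1
  have hr : |t| ^ (Fintype.card ι : ℝ)⁻¹ * (|t| ^ (Fintype.card ι : ℝ)⁻¹) ^ (Fintype.card ι - 1)
      = |t| := by
    rw [← pow_succ', Nat.sub_add_cancel (Nat.one_le_iff_ne_zero.2 hn),
      Real.rpow_inv_natCast_pow (abs_nonneg t) hn]
  rw [← mul_prod_erase _ _ (mem_univ i₀), prod_congr rfl hoff, prod_const,
    card_erase_of_mem (mem_univ i₀), card_univ, balancedFactors]
  by_cases ht : t < 0
  · rw [if_pos ⟨rfl, ht⟩, neg_mul, hr, abs_of_neg ht, neg_neg]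
  · rw [if_neg fun h => ht h.2, hr, abs_of_nonneg (not_lt.1 ht)]

theorem pow_balancedFactors (i₀ : ι) (t : ℝ) (i : ι) :
    balancedFactors i₀ t i ^ (2 * Fintype.card ι) = t ^ 2 := by
  have : Nonempty ι := ⟨i₀⟩
  have hsq : balancedFactors i₀ t i ^ 2 = (|t| ^ (Fintype.card ι : ℝ)⁻¹) ^ 2 := by
    unfold balancedFactors
    split_ifs <;> ring
  rw [pow_mul, hsq, ← pow_mul, mul_comm, pow_mul,
    Real.rpow_inv_natCast_pow (abs_nonneg t) Fintype.card_ne_zero, sq_abs]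

theorem pow_pred_balancedFactors {k : ℕ} (hk : k = 2 * Fintype.card ι) (i₀ : ι) (t : ℝ)
    (i : ι) :
    balancedFactors i₀ t i ^ (k - 1) = (∏ j ∈ univ.erase i, balancedFactors i₀ t j) * t := by
  have hm : 2 ≤ k := by have := Fintype.card_pos (α := ι) (h := ⟨i₀⟩); omega
  have h := pow_pred_eq_prod_erase_mul (z := balancedFactors i₀ t) hm (i := i) <| by
    rw [hk, pow_balancedFactors, prod_balancedFactors]
  rwa [prod_balancedFactors] at h

end BalancedFactors

section PowerHypergraph

variable {V : Type*} [Fintype V] [DecidableEq V] (G : SimpleGraph V) [DecidableRel G.Adj]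

def powerEdge (s : ℕ) (u v : V) : Finset (V × Fin s) :=
  ({u} ×ˢ (univ : Finset (Fin s))) ∪ ({v} ×ˢ (univ : Finset (Fin s)))

omit [Fintype V] in
theorem mem_powerEdge {s : ℕ} {u v w : V} {i : Fin s} :
    (w, i) ∈ powerEdge s u v ↔ w = u ∨ w = v := by
  simp [powerEdge, eq_comm]

theorem filter_mem_powerEdges (s : ℕ) (v : V) (i : Fin s) :
    (powerEdges G s).filter (fun e => (v, i) ∈ e) = (G.neighborFinset v).image (powerEdge s v) := by
  ext e
  simp only [powerEdges, mem_filter, mem_image, mem_univ, true_and, Prod.exists,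
    SimpleGraph.mem_neighborFinset]
  constructor
  · rintro ⟨⟨a, b, hab, rfl⟩, hmem⟩
    rcases mem_powerEdge.1 hmem with rfl | rfl
    · exact ⟨b, hab, rfl⟩
    · exact ⟨a, hab.symm, union_comm _ _⟩
  · rintro ⟨u, hu, rfl⟩
    exact ⟨⟨v, u, hu, rfl⟩, mem_powerEdge.2 (Or.inl rfl)⟩

omit [Fintype V] in
theorem powerEdge_injOn {s : ℕ} (hs : s ≠ 0) (v : V) :
    Set.InjOn (powerEdge s v) {u | v ≠ u} := by
  intro a ha b _ h
  have hmem : (a, (⟨0, Nat.pos_of_ne_zero hs⟩ : Fin s)) ∈ powerEdge s v b :=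
    h ▸ mem_powerEdge.2 (Or.inr rfl)
  exact (mem_powerEdge.1 hmem).resolve_left (Ne.symm ha)

theorem card_filter_mem_powerEdges {s : ℕ} (v : V) (i : Fin s) :
    ((powerEdges G s).filter (fun e => (v, i) ∈ e)).card = G.degree v := by
  rw [filter_mem_powerEdges, card_image_of_injOn, card_neighborFinset_eq_degree]
  exact (powerEdge_injOn (Fin.pos i).ne' v).mono fun u hu => G.ne_of_adj (by simpa using hu)

omit [Fintype V] in
theorem prod_erase_powerEdge {s : ℕ} {u v : V} (hvu : v ≠ u) (x : V × Fin s → ℝ) (i : Fin s) :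
    ∏ w ∈ (powerEdge s v u).erase (v, i), x w
      = (∏ j ∈ univ.erase i, x (v, j)) * ∏ j, x (u, j) := by
  have hsplit : (powerEdge s v u).erase (v, i) = {v} ×ˢ univ.erase i ∪ {u} ×ˢ univ := by
    ext ⟨w, j⟩
    simp only [powerEdge, mem_erase, mem_union, mem_product, mem_singleton, mem_univ, and_true,
      ne_eq, Prod.mk.injEq]
    grind
  rw [hsplit, prod_union (disjoint_product.2 (.inl (disjoint_singleton.2 hvu))), prod_product,
    prod_product, prod_singleton, prod_singleton]

theorem sum_filter_mem_powerEdges {s : ℕ} (x : V × Fin s → ℝ) (v : V) (i : Fin s) :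
    ∑ e ∈ (powerEdges G s).filter (fun e => (v, i) ∈ e), ∏ w ∈ e.erase (v, i), x w
      = (∏ j ∈ univ.erase i, x (v, j)) * ∑ u ∈ G.neighborFinset v, ∏ j, x (u, j) := by
  rw [filter_mem_powerEdges, sum_image, mul_sum]
  · exact sum_congr rfl fun u hu => prod_erase_powerEdge (G.ne_of_adj (by simpa using hu)) x i
  · exact (powerEdge_injOn (Fin.pos i).ne' v).mono fun u hu => G.ne_of_adj (by simpa using hu)

theorem isQHEigPow_iff {k s : ℕ} {lam : ℝ} {x : V × Fin s → ℝ} :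
    IsQHEigPow G k s lam x ↔ x ≠ 0 ∧ ∀ v i,
      lam * x (v, i) ^ (k - 1) = G.degree v * x (v, i) ^ (k - 1)
        + (∏ j ∈ univ.erase i, x (v, j)) * ∑ u ∈ G.neighborFinset v, ∏ j, x (u, j) := by
  simp only [IsQHEigPow, Prod.forall, card_filter_mem_powerEdges, sum_filter_mem_powerEdges]

theorem IsQHEigPow.exists_isEigenvectorOnSupport {k s : ℕ} (hks : k = 2 * s) {lam : ℝ}
    {x : V × Fin s → ℝ} (hx : IsQHEigPow G k s lam x) :
    ∃ f : V → ℝ, IsEigenvectorOnSupport (G.signlessLapMatrix ℝ) lam f := by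
  obtain ⟨hx0, heq⟩ := (isQHEigPow_iff G).1 hx
  obtain ⟨⟨v, i⟩, hi : x (v, i) ≠ 0⟩ := Function.ne_iff.1 hx0
  have : Nonempty (Fin s) := ⟨i⟩
  by_cases hP : (fun v => ∏ j, x (v, j)) = 0
  · obtain ⟨j, -, hj⟩ := prod_eq_zero_iff.1 (congrFun hP v)
    have hlam : lam = G.degree v := by
      have h := heq v i
      rw [prod_eq_zero (mem_erase.2 ⟨fun hji => hi (by rwa [← hji]), mem_univ j⟩) hj, zero_mul,
        add_zero] at h
      exact mul_right_cancel₀ (pow_ne_zero _ hi) h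
    refine ⟨Pi.single v 1, by simp, fun w hw => ?_⟩
    obtain rfl : w = v := by
      by_contra h
      exact hw (Pi.single_eq_of_ne h 1)
    rw [signlessLapMatrix_mulVec_apply, sum_eq_zero fun u hu =>
      Pi.single_eq_of_ne (G.ne_of_adj ((G.mem_neighborFinset w u).1 hu)).symm 1]
    simp [hlam]
  · refine ⟨_, hP, fun v hv => ?_⟩
    rw [signlessLapMatrix_mulVec_apply,
      ← sub_mul_prod_eq_of_forall (by simpa using hks) hv (heq v)]
    ring

theorem IsEigenvectorOnSupport.isQHEigPow_balancedFactors {k s : ℕ} (hs : 2 ≤ s)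
    (hks : k = 2 * s) (i₀ : Fin s) {lam : ℝ} {f : V → ℝ}
    (hf : IsEigenvectorOnSupport (G.signlessLapMatrix ℝ) lam f) :
    IsQHEigPow G k s lam fun p => balancedFactors i₀ (f p.1) p.2 := by
  have hprod : ∀ v, ∏ j, balancedFactors i₀ (f v) j = f v := fun v => prod_balancedFactors i₀ _
  have hkey := pow_pred_balancedFactors (by simpa using hks) i₀
  refine (isQHEigPow_iff G).2 ⟨fun h => ?_, fun v i => ?_⟩
  · obtain ⟨v, hv⟩ := Function.ne_iff.1 hf.1
    exact hv (by rw [← hprod v]; exact prod_eq_zero (mem_univ i₀) (congrFun h (v, i₀)))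
  simp only [hprod, hkey]
  by_cases hv : f v = 0
  · obtain ⟨j, hj⟩ := Fintype.exists_ne_of_one_lt_card (by rw [Fintype.card_fin]; omega) i
    rw [hv, prod_eq_zero (mem_erase.2 ⟨hj, mem_univ j⟩) (congrFun (balancedFactors_zero i₀) j)]
    ring
  · have := hf.2 v hv
    rw [signlessLapMatrix_mulVec_apply] at this
    linear_combination -(∏ j ∈ univ.erase i, balancedFactors i₀ (f v) j) * this

end PowerHypergraph

/-- `λ` is a signless Laplacian H-eigenvalue of `G^{k,k/2}` iff there is a
nonempty `U ⊆ V(G)` with `G[U]` connected such that `λ` is an eigenvalue of the principal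
submatrix `Q(G)[U]` of the signless Laplacian matrix `Q(G) = D(G) + A(G)` of `G`. -/
theorem stmt14 {V : Type*} [Fintype V] [DecidableEq V] (G : SimpleGraph V)
    [DecidableRel G.Adj] (k s : ℕ) (hk : 4 ≤ k) (hks : k = 2 * s) (lam : ℝ) :
    (∃ x : V × Fin s → ℝ, IsQHEigPow G k s lam x) ↔
    ∃ U : Finset V, U.Nonempty ∧ (G.induce (U : Set V)).Connected ∧
      ∃ y : {v : V // v ∈ U} → ℝ, y ≠ 0 ∧
        (Matrix.of fun u w : {v : V // v ∈ U} =>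
            (if u.1 = w.1 then (G.degree u.1 : ℝ) else 0)
              + (if G.Adj u.1 w.1 then (1 : ℝ) else 0)).mulVec y = lam • y := by
  -- the matrix in the statement is `(G.signlessLapMatrix ℝ).submatrix (↑) (↑)` by unfolding
  constructor
  · rintro ⟨x, hx⟩
    obtain ⟨f, hf⟩ := hx.exists_isEigenvectorOnSupport G hks
    exact hf.exists_connected_submatrix fun _ _ => G.signlessLapMatrix_apply_of_not_adj
  · rintro ⟨U, -, -, y, hy, hQy⟩
    obtain ⟨f, hf⟩ := exists_isEigenvectorOnSupport_of_submatrix (A := G.signlessLapMatrix ℝ) hy hQy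
    exact ⟨_, hf.isQHEigPow_balancedFactors G (by omega) hks ⟨0, by omega⟩⟩
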